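/- arXiv:2011.07495 — 2 statements merged into one kernel-verified Lean document; each statement's English description precedes it below -/
import Mathlib

section
/- Let n be a natural number, let c' < 0 and c be real constants, and let f, g : ℝ → (Fin n → ℝ) satisfy f α i ≤ c' and g α i ≥ c for all α and all i. Define a α i = α · f α i − g α i. Let w : ℝ → (Fin n → ℝ) be such that for every α, w α lies in the box [0,1]^n and minimizes the function v ↦ ∑_{i} v i · (a α i) over the box [0,1]^n. Then there exists α₀ ∈ ℝ such that for all α > α₀ and all i, w α i = 1. -/
/-- Main step of Theorem 3: if `f α i ≤ c' < 0` and `g α i ≥ c`, and for every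
`α` the vector `w α` minimizes `v ↦ ∑ i, v i * (α * f α i - g α i)` over the
box `[0,1]^n`, then there is `α₀` such that `w α i = 1` for all `α > α₀` and
all `i`. -/
theorem fair_theorem3_step_eventually_one
    (n : ℕ) (c' c : ℝ) (hc' : c' < 0)
    (f g : ℝ → Fin n → ℝ)
    (hf : ∀ α i, f α i ≤ c') (hg : ∀ α i, c ≤ g α i)
    (a : ℝ → Fin n → ℝ) (ha : ∀ α i, a α i = α * f α i - g α i)
    (w : ℝ → Fin n → ℝ)
    (hbox : ∀ α i, 0 ≤ w α i ∧ w α i ≤ 1)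
    (hmin : ∀ α (v : Fin n → ℝ), (∀ i, 0 ≤ v i ∧ v i ≤ 1) →
      ∑ i, w α i * a α i ≤ ∑ i, v i * a α i) :
    ∃ α₀ : ℝ, ∀ α > α₀, ∀ i, w α i = 1 := by
  refine ⟨max 0 (c / c'), fun α hα i => ?_⟩
  have hα0 : 0 < α := lt_of_le_of_lt (le_max_left _ _) hα
  have hαc : c / c' < α := lt_of_le_of_lt (le_max_right _ _) hα
  have haneg : ∀ j, a α j < 0 := by
    intro j
    have h1 : α * f α j ≤ α * c' := by
      exact mul_le_mul_of_nonneg_left (hf α j) hα0.le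
    have h2 : α * c' < c := by
      have := (div_lt_iff_of_neg hc').mp hαc
      linarith [this]
    rw [ha]
    have := hg α j
    linarith
  -- compare with v ≡ 1
  have hv : ∀ j : Fin n, 0 ≤ (1 : ℝ) ∧ (1 : ℝ) ≤ 1 := fun _ => ⟨zero_le_one, le_refl _⟩
  have hle : ∑ j, w α j * a α j ≤ ∑ j, a α j := by
    have := hmin α (fun _ => 1) hv
    simpa using this
  have hterm : ∀ j : Fin n, a α j ≤ w α j * a α j := by
    intro j
    have := mul_le_mul_of_nonpos_right (hbox α j).2 (haneg j).le
    simpa using this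
  have hge : ∑ j, a α j ≤ ∑ j, w α j * a α j :=
    Finset.sum_le_sum fun j _ => hterm j
  have heq : ∑ j, (w α j * a α j - a α j) = 0 := by
    rw [Finset.sum_sub_distrib]
    linarith
  have hzero : w α i * a α i - a α i = 0 := by
    have := Finset.sum_eq_zero_iff_of_nonneg
      (fun j (_ : j ∈ Finset.univ) => sub_nonneg.mpr (hterm j)) |>.mp heq
    exact this i (Finset.mem_univ i)
  have : (w α i - 1) * a α i = 0 := by ring_nf; linarith [hzero]
  rcases mul_eq_zero.mp this with h | h
  · linarith
  · exact absurd h (haneg i).ne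
end

section
/- Let n be a natural number, let c' < 0 and c be real constants, and let f, g : ℝ → (Fin n → ℝ) satisfy f α i ≤ c' and g α i ≥ c for all α and all i. Define a α i = α · f α i − g α i. Let w : ℝ → (Fin n → ℝ) be such that for every α, w α lies in the box [0,1]^n and minimizes the function v ↦ ∑_{i} v i · (a α i) over the box [0,1]^n. Then for every index i, w α i tends to 1 as α tends to +∞. -/
/-- Theorem 3: under the uniform bounds `f α i ≤ c' < 0` and `g α i ≥ c`, the
optimal instance weights (minimizers of `v ↦ ∑ i, v i * (α * f α i - g α i)`
over the box `[0,1]^n`) converge to `1` for every instance as `α → +∞`. -/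
theorem fair_theorem3_weights_tendsto_one
    (n : ℕ) (c' c : ℝ) (hc' : c' < 0)
    (f g : ℝ → Fin n → ℝ)
    (hf : ∀ α i, f α i ≤ c') (hg : ∀ α i, c ≤ g α i)
    (a : ℝ → Fin n → ℝ) (ha : ∀ α i, a α i = α * f α i - g α i)
    (w : ℝ → Fin n → ℝ)
    (hbox : ∀ α i, 0 ≤ w α i ∧ w α i ≤ 1)
    (hmin : ∀ α (v : Fin n → ℝ), (∀ i, 0 ≤ v i ∧ v i ≤ 1) →
      ∑ i, w α i * a α i ≤ ∑ i, v i * a α i) :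
    ∀ i, Filter.Tendsto (fun α => w α i) Filter.atTop (nhds 1) := by
  intro i
  have hev : ∀ᶠ α in Filter.atTop, w α i = 1 := by
    filter_upwards [Filter.eventually_gt_atTop (c / c'), Filter.eventually_gt_atTop 0] with α hα hα0
    -- a α i < 0 for large α
    have haneg : a α i < 0 := by
      have h1 : α * c' < c := by
        have := (div_lt_iff_of_neg hc').mp hα
        linarith
      have h2 : α * f α i ≤ α * c' := by nlinarith [hf α i]
      rw [ha]
      have := hg α i
      linarith
    -- compare with v = update (w α) i 1
    have hvbox : ∀ j, 0 ≤ Function.update (w α) i 1 j ∧ Function.update (w α) i 1 j ≤ 1 := by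
      intro j
      by_cases hj : j = i
      · subst hj; simp
      · simp [Function.update_of_ne hj]; exact hbox α j
    have h := hmin α _ hvbox
    have key1 : ∑ j, Function.update (w α) i 1 j * a α j
        = 1 * a α i + ∑ j ∈ Finset.univ.erase i, w α j * a α j := by
      rw [← Finset.add_sum_erase _ _ (Finset.mem_univ i)]
      congr 1
      · simp
      · exact Finset.sum_congr rfl fun j hj => by
          rw [Function.update_of_ne (Finset.ne_of_mem_erase hj)]
    have key2 : ∑ j, w α j * a α j
        = w α i * a α i + ∑ j ∈ Finset.univ.erase i, w α j * a α j :=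
      (Finset.add_sum_erase _ _ (Finset.mem_univ i)).symm
    rw [key1, key2] at h
    have hle : w α i * a α i ≤ a α i := by linarith
    have hb := hbox α i
    nlinarith [hb.1, hb.2]
  exact Filter.Tendsto.congr' (Filter.EventuallyEq.symm hev) tendsto_const_nhds
end
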